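/- arXiv:2604.22395 — 2 statements merged into one kernel-verified Lean document; each statement's English description precedes it below -/
import Mathlib

section
/- There exists a (2,3;5)-balanced biregular graph of order 8, i.e., a simple graph of girth 5 on 8 vertices with 4 vertices of degree 2 and 4 vertices of degree 3; consequently, n_bb(2,3;5) = 8. -/
open SimpleGraph Set

/-- The degree of a vertex, via the natural cardinality of its neighbor set. -/
noncomputable def deg {V : Type*} (G : SimpleGraph V) (v : V) : ℕ :=
  (G.neighborSet v).ncard

/-- Number of edges both of whose endpoints have degree `d`. -/
noncomputable def edgeCountDeg {V : Type*} (G : SimpleGraph V) (d : ℕ) : ℕ :=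
  {e ∈ G.edgeSet | ∀ v ∈ e, deg G v = d}.ncard

/-- An `(r,s;g)`-balanced biregular graph: girth `g`, degree set exactly `{r, s}`,
and equally many vertices of degree `r` as of degree `s`. -/
def IsBabi {V : Type*} (r s g : ℕ) (G : SimpleGraph V) : Prop :=
  G.girth = g ∧ (∀ v, deg G v = r ∨ deg G v = s) ∧
  (∃ v, deg G v = r) ∧ (∃ v, deg G v = s) ∧
  {v | deg G v = r}.ncard = {v | deg G v = s}.ncard

/-!
A cycle of length `g` has `g` distinct vertices, so a graph of girth 5 has at least 5 vertices.
In a balanced (2,3)-biregular graph on `n` vertices, the `n / 2` vertices of degree 3 are exactly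
the odd-degree ones, so `n / 2` is even by the handshake lemma; hence `4 ∣ n` and `n ≥ 8`.
Deleting the endpoints of an edge of the Petersen graph leaves a graph of girth at least 5
(a subgraph of a graph of girth 5) containing a 5-cycle, with four vertices of each degree.
-/

open scoped Finset

namespace SimpleGraph

variable {V : Type*} {G : SimpleGraph V}

lemma Walk.IsCycle.length_le_card [Fintype V] {a : V} {w : G.Walk a a} (hw : w.IsCycle) :
    w.length ≤ Fintype.card V := by
  cases w with
  | nil => exact (Walk.not_isCycle_nil hw).elim
  | cons h p => exact ((Walk.cons_isCycle_iff p h).1 hw).1.length_lt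

lemma girth_le_card [Fintype V] : G.girth ≤ Fintype.card V := by
  by_cases hG : G.IsAcyclic
  · simp [girth_eq_zero.2 hG]
  · obtain ⟨a, w, hw, hlen⟩ := exists_girth_eq_length.2 hG
    exact hlen ▸ hw.length_le_card

lemma Walk.exists_triangle_of_length_eq_three {a : V} (w : G.Walk a a) (hw : w.length = 3) :
    ∃ b c, G.Adj a b ∧ G.Adj b c ∧ G.Adj c a := by
  match w, hw with
  | .cons h₁ (.cons h₂ (.cons h₃ .nil)), _ => exact ⟨_, _, h₁, h₂, h₃⟩

lemma Walk.IsCycle.exists_square_of_length_eq_four {a : V} {w : G.Walk a a} (hc : w.IsCycle)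
    (hw : w.length = 4) :
    ∃ b c d, G.Adj a b ∧ G.Adj b c ∧ G.Adj c d ∧ G.Adj d a ∧ a ≠ c ∧ b ≠ d := by
  match w, hw with
  | .cons h₁ (.cons h₂ (.cons h₃ (.cons h₄ .nil))), _ =>
    have hnodup := hc.support_nodup
    simp only [Walk.support_cons, Walk.support_nil, List.tail_cons, List.nodup_cons,
      List.mem_cons, List.not_mem_nil] at hnodup
    exact ⟨_, _, _, h₁, h₂, h₃, h₄, by grind, by grind⟩

lemma five_le_egirth (h₃ : ∀ a b c, G.Adj a b → G.Adj b c → ¬G.Adj c a)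
    (h₄ : ∀ a b c d, G.Adj a b → G.Adj b c → G.Adj c d → G.Adj d a → a = c ∨ b = d) :
    5 ≤ G.egirth := by
  rw [le_egirth]
  intro a w hw
  have : 5 ≤ w.length := by
    have h3 := hw.three_le_length
    by_contra! hlt
    interval_cases hlen : w.length
    · obtain ⟨b, c, hab, hbc, hca⟩ := w.exists_triangle_of_length_eq_three hlen
      exact h₃ a b c hab hbc hca
    · obtain ⟨b, c, d, hab, hbc, hcd, hda, hac, hbd⟩ := hw.exists_square_of_length_eq_four hlen
      exact (h₄ a b c d hab hbc hcd hda).elim hac hbd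
  exact_mod_cast this

end SimpleGraph

lemma deg_eq_degree {V : Type*} (G : SimpleGraph V) (v : V) [Fintype (G.neighborSet v)] :
    deg G v = G.degree v := by
  rw [deg, ← card_neighborFinset_eq_degree, ← Set.ncard_coe_finset, coe_neighborFinset]

lemma ncard_setOf_deg_eq {V : Type*} [Fintype V] (G : SimpleGraph V) [DecidableRel G.Adj] (d : ℕ) :
    {v | deg G v = d}.ncard = #{v | G.degree v = d} := by
  rw [← Set.ncard_coe_finset]
  simp [deg_eq_degree]

lemma IsBabi.four_dvd_card {V : Type*} [Fintype V] {g : ℕ} {G : SimpleGraph V}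
    (hG : IsBabi 2 3 g G) : 4 ∣ Fintype.card V := by
  classical
  obtain ⟨-, hdeg, -, -, hbal⟩ := hG
  rw [ncard_setOf_deg_eq, ncard_setOf_deg_eq] at hbal
  have hodd : #{v | G.degree v = 3} = #{v | Odd (G.degree v)} := by
    congr 1
    ext v
    rcases hdeg v with h | h <;> simp [← deg_eq_degree, h, Nat.odd_iff]
  have hcard : #{v | G.degree v = 2} + #{v | G.degree v = 3} = Fintype.card V := by
    rw [← Finset.card_univ, ← Finset.card_filter_add_card_filter_not (s := .univ) (G.degree · = 2)]
    congr 2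
    ext v
    rcases hdeg v with h | h <;> simp [← deg_eq_degree, h]
  obtain ⟨k, hk⟩ := G.even_card_odd_degree_vertices
  omega

lemma IsBabi.eight_le_card {V : Type*} [Fintype V] {G : SimpleGraph V} (hG : IsBabi 2 3 5 G) :
    8 ≤ Fintype.card V := by
  have h5 : 5 ≤ Fintype.card V := hG.1 ▸ G.girth_le_card
  have h4 := hG.four_dvd_card
  omega

/-- Label the Petersen graph by an outer 5-cycle `o₀ … o₄`, spokes `oₖ iₖ` and an inner pentagram
`iₖ iₖ₊₂`; delete `o₄` and `i₄` and write `k` for `oₖ` and `k + 4` for `iₖ`. -/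
def petersenMinusEdge : SimpleGraph (Fin 8) :=
  SimpleGraph.fromRel fun a b => (a.val, b.val) ∈
    [(0, 1), (1, 2), (2, 3), (0, 4), (1, 5), (2, 6), (3, 7), (4, 6), (5, 7), (4, 7)]

instance : DecidableRel petersenMinusEdge.Adj :=
  inferInstanceAs (DecidableRel (SimpleGraph.fromRel _).Adj)

lemma petersenMinusEdge_girth : petersenMinusEdge.girth = 5 := by
  let pentagon : petersenMinusEdge.Walk 0 0 :=
    .cons (v := 1) (by decide) <| .cons (v := 5) (by decide) <| .cons (v := 7) (by decide) <|
      .cons (v := 4) (by decide) <| .cons (by decide) .nil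
  have hpentagon : pentagon.IsCycle := by
    rw [Walk.isCycle_def, Walk.isTrail_def]
    decide
  have hle : petersenMinusEdge.egirth ≤ 5 := egirth_le_length hpentagon
  have hge : 5 ≤ petersenMinusEdge.egirth := five_le_egirth (by decide) (by decide)
  rw [girth, le_antisymm hle hge]
  rfl

/-- a `(2,3;5)`-babi-graph of order 8 exists and `n_bb(2,3;5) = 8`. -/
theorem stmt_10 :
    (∃ G : SimpleGraph (Fin 8), G.girth = 5 ∧
      {v | deg G v = 2}.ncard = 4 ∧ {v | deg G v = 3}.ncard = 4) ∧
    (∀ (n : ℕ) (G : SimpleGraph (Fin n)), IsBabi 2 3 5 G → 8 ≤ n) := by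
  refine ⟨⟨petersenMinusEdge, petersenMinusEdge_girth, ?_, ?_⟩, fun n G hG => ?_⟩
  · rw [ncard_setOf_deg_eq]
    decide
  · rw [ncard_setOf_deg_eq]
    decide
  · simpa using hG.eight_le_card
end

section
/- Let 2 ≤ r < s be integers with s + 1 ≥ 2r. Then the minimum order n_bb(r,s;3) of a balanced biregular graph of girth 3 with degrees r and s equals 2(s − r + 1). -/
open SimpleGraph Set

/-! The lower bound is a double count of the edges between the vertices `B` of degree `s` and
the vertices `A` of degree `r`: a vertex of `B` has at most `|B| - 1` neighbours in `B`, hence at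
least `s + 1 - |B|` in `A`, while a vertex of `A` has at most `r` neighbours in `B`. Since
`|A| = |B|`, this gives `|B| ≥ s - r + 1`.

The bound is attained by making `B ≅ ℤ/k`, `k = s - r + 1`, a clique and joining `A ≅ ℤ/k` to it
circulantly, `a ~ b ↔ b - a ∈ {0, …, r - 1}`, which needs `r ≤ k`; then `a = 0, b = 0, b = 1` is
a triangle. -/

open scoped Finset

namespace SimpleGraph

variable {V W : Type*} {G : SimpleGraph V} {G' : SimpleGraph W}

theorem deg_eq_degree (v : V) [Fintype (G.neighborSet v)] : deg G v = G.degree v := by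
  rw [deg, ← Nat.card_coe_set_eq, Nat.card_eq_fintype_card, card_neighborSet_eq_degree]

theorem Iso.deg_apply (f : G ≃g G') (v : V) : deg G' (f v) = deg G v :=
  Nat.card_congr (f.mapNeighborSet v).symm

theorem IsBabi.of_iso {r s g : ℕ} (f : G ≃g G') (h : IsBabi r s g G) : IsBabi r s g G' := by
  obtain ⟨hg, hdeg, ⟨v, hv⟩, ⟨w, hw⟩, hbal⟩ := h
  have hcard (d : ℕ) : {v | deg G' v = d}.ncard = {v | deg G v = d}.ncard :=
    Nat.card_congr (f.toEquiv.subtypeEquiv fun v => by simp [f.deg_apply]).symm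
  refine ⟨f.girth_eq ▸ hg, fun v => ?_, ⟨f v, ?_⟩, ⟨f w, ?_⟩, ?_⟩
  · simpa [← f.deg_apply (f.symm v)] using hdeg (f.symm v)
  · rwa [f.deg_apply]
  · rwa [f.deg_apply]
  · rw [hcard, hcard, hbal]

theorem girth_eq_three_of_not_cliqueFree (h : ¬ G.CliqueFree 3) : G.girth = 3 := by
  rw [not_cliqueFree_iff_top_isContained] at h
  have : G.egirth = 3 :=
    le_antisymm (h.egirth_le.trans_eq (egirth_top (by simp))) three_le_egirth
  simp [girth, this]

theorem card_mul_sub_card_le [Fintype V] [DecidableEq V] [DecidableRel G.Adj] {A B : Finset V}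
    (hAB : ∀ v, v ∈ A ∨ v ∈ B) {r s : ℕ} (hA : ∀ a ∈ A, G.degree a ≤ r)
    (hB : ∀ b ∈ B, s ≤ G.degree b) : #B * (s + 1 - #B) ≤ #A * r := by
  refine Finset.card_mul_le_card_mul G.Adj (fun b hb => ?_) (fun a ha => ?_)
  · have hsplit : G.degree b ≤ #(A.bipartiteAbove G.Adj b) + #(B.filter (G.Adj b)) := by
      rw [← card_neighborFinset_eq_degree]
      refine (Finset.card_le_card fun v hv => ?_).trans (Finset.card_union_le _ _)
      rw [mem_neighborFinset] at hv
      rcases hAB v with h | h <;> simp [Finset.bipartiteAbove, h, hv]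
    have hB' : #(B.filter (G.Adj b)) ≤ #B - 1 := by
      rw [← Finset.card_erase_of_mem hb]
      exact Finset.card_le_card fun v hv => by
        simp only [Finset.mem_filter] at hv
        exact Finset.mem_erase.2 ⟨hv.2.ne', hv.1⟩
    have hsb := hB b hb
    have hBpos : 0 < #B := Finset.card_pos.2 ⟨b, hb⟩
    omega
  · calc #(B.bipartiteBelow G.Adj a) ≤ G.degree a := by
          rw [← card_neighborFinset_eq_degree]
          exact Finset.card_le_card fun v hv => by
            simp only [Finset.bipartiteBelow, Finset.mem_filter] at hv
            exact (mem_neighborFinset _ _ _).2 hv.2.symm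
      _ ≤ r := hA a ha

theorem IsBabi.two_mul_sub_add_one_le_card [Finite V] {r s g : ℕ} (hrs : r ≠ s)
    (h : IsBabi r s g G) : 2 * (s - r + 1) ≤ Nat.card V := by
  classical
  have := Fintype.ofFinite V
  obtain ⟨-, hdeg, -, ⟨w, hw⟩, hbal⟩ := h
  set A : Finset V := {v | deg G v = r}
  set B : Finset V := {v | deg G v = s}
  have hA : #A = #B := by simpa [A, B, ← Set.ncard_coe_finset] using hbal
  have hAB : #A + #B = Nat.card V := by
    rw [Nat.card_eq_fintype_card, ← Finset.card_union_of_disjoint, ← Finset.card_univ]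
    · congr 1
      ext v
      simpa [A, B] using hdeg v
    · exact Finset.disjoint_filter.2 fun v _ h h' => hrs (h.symm.trans h')
  have hBpos : 0 < #B := Finset.card_pos.2 ⟨w, by simpa [B] using hw⟩
  have hcount : #B * (s + 1 - #B) ≤ #A * r :=
    card_mul_sub_card_le (G := G) (fun v => by simpa [A, B] using hdeg v)
      (fun a ha => by rw [← deg_eq_degree, (Finset.mem_filter.1 ha).2])
      (fun b hb => by rw [← deg_eq_degree, (Finset.mem_filter.1 hb).2])
  rw [hA] at hcount
  have := Nat.le_of_mul_le_mul_left hcount hBpos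
  omega

variable {α : Type*} [AddGroup α]

def cliqueCirculant (S : Set α) : SimpleGraph (α ⊕ α) where
  Adj
    | .inl a, .inr b | .inr b, .inl a => b - a ∈ S
    | .inr b, .inr b' => b ≠ b'
    | .inl _, .inl _ => False
  symm := ⟨by rintro (a | b) (a' | b') h <;> simp_all [ne_comm]⟩
  loopless := ⟨by rintro (a | b) h <;> simp_all⟩

variable {S : Set α}

theorem cliqueCirculant_neighborSet_inl (a : α) :
    (cliqueCirculant S).neighborSet (.inl a) = .inr '' ((· - a) ⁻¹' S) := by
  ext (a' | b) <;> simp [cliqueCirculant]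

theorem cliqueCirculant_neighborSet_inr (b : α) :
    (cliqueCirculant S).neighborSet (.inr b) = .inl '' ((b - ·) ⁻¹' S) ∪ .inr '' {b}ᶜ := by
  ext (a | b') <;> simp [cliqueCirculant, ne_comm]

theorem deg_cliqueCirculant_inl (a : α) : deg (cliqueCirculant S) (.inl a) = S.ncard := by
  rw [deg, cliqueCirculant_neighborSet_inl, Set.ncard_image_of_injective _ Sum.inr_injective,
    Set.ncard_preimage_of_injective_subset_range sub_left_injective
      fun x _ => ⟨x + a, add_sub_cancel_right x a⟩]

theorem deg_cliqueCirculant_inr [Finite α] (b : α) :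
    deg (cliqueCirculant S) (.inr b) = S.ncard + (Nat.card α - 1) := by
  rw [deg, cliqueCirculant_neighborSet_inr, Set.ncard_union_eq (by simp [Set.disjoint_left]),
    Set.ncard_image_of_injective _ Sum.inl_injective,
    Set.ncard_image_of_injective _ Sum.inr_injective,
    Set.ncard_preimage_of_injective_subset_range sub_right_injective
      fun x _ => ⟨-x + b, by simp [sub_eq_add_neg]⟩,
    Set.ncard_compl, Set.ncard_singleton]

theorem not_cliqueFree_cliqueCirculant {x : α} (h0 : 0 ∈ S) (hx : x ∈ S) (hx0 : x ≠ 0) :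
    ¬ (cliqueCirculant S).CliqueFree 3 := by
  classical
  exact fun h => h {.inl 0, .inr 0, .inr x}
    (is3Clique_triple_iff.2 (by simp [cliqueCirculant, hx0.symm, h0, hx]))

theorem isBabi_cliqueCirculant [Finite α] {r s : ℕ} {x : α} (h0 : 0 ∈ S) (hx : x ∈ S)
    (hx0 : x ≠ 0) (hS : S.ncard = r) (hs : r + (Nat.card α - 1) = s) :
    IsBabi r s 3 (cliqueCirculant S) := by
  have : Nontrivial α := nontrivial_of_ne x 0 hx0
  have hrs : r ≠ s := by have := Finite.one_lt_card_iff_nontrivial.2 this; omega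
  have hA : {v | deg (cliqueCirculant S) v = r} = Set.range Sum.inl := by
    ext (a | b) <;> simp [deg_cliqueCirculant_inl, deg_cliqueCirculant_inr, hS, hs, hrs.symm]
  have hB : {v | deg (cliqueCirculant S) v = s} = Set.range Sum.inr := by
    ext (a | b) <;> simp [deg_cliqueCirculant_inl, deg_cliqueCirculant_inr, hS, hs, hrs]
  refine ⟨girth_eq_three_of_not_cliqueFree (not_cliqueFree_cliqueCirculant h0 hx hx0),
    ?_, ⟨.inl 0, ?_⟩, ⟨.inr 0, ?_⟩, ?_⟩
  · rintro (a | b) <;> simp [deg_cliqueCirculant_inl, deg_cliqueCirculant_inr, hS, hs]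
  · simp [deg_cliqueCirculant_inl, hS]
  · simp [deg_cliqueCirculant_inr, hS, hs]
  · rw [hA, hB, Set.ncard_range_of_injective Sum.inl_injective,
      Set.ncard_range_of_injective Sum.inr_injective]

theorem exists_isBabi_three {r s : ℕ} (hr : 2 ≤ r) (hrs : r < s) (h2r : 2 * r ≤ s + 1) :
    ∃ G : SimpleGraph (Fin (2 * (s - r + 1))), IsBabi r s 3 G := by
  have hS : {x : Fin (s - r + 1) | x.val < r}.ncard = r := by
    rw [← Fin.range_castLE (show r ≤ s - r + 1 by omega),
      Set.ncard_range_of_injective (Fin.castLE_injective _), Nat.card_eq_fintype_card,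
      Fintype.card_fin]
  have hH : IsBabi r s 3 (cliqueCirculant {x : Fin (s - r + 1) | x.val < r}) :=
    isBabi_cliqueCirculant (x := ⟨1, by omega⟩) (by simp; omega) (by simp; omega)
      (Fin.ne_of_val_ne (by simp)) hS (by simp; omega)
  exact ⟨_, hH.of_iso (overFinIso _ (by simp; omega))⟩

end SimpleGraph

/-- `n_bb(r,s;3) = 2(s − r + 1)` when `s + 1 ≥ 2r`. -/
theorem stmt_11 (r s : ℕ) (hr : 2 ≤ r) (hrs : r < s) (h2r : 2 * r ≤ s + 1) :
    (∃ G : SimpleGraph (Fin (2 * (s - r + 1))), IsBabi r s 3 G) ∧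
    (∀ (n : ℕ) (G : SimpleGraph (Fin n)), IsBabi r s 3 G → 2 * (s - r + 1) ≤ n) :=
  ⟨SimpleGraph.exists_isBabi_three hr hrs h2r, fun n _ hG => by
    simpa using hG.two_mul_sub_add_one_le_card hrs.ne⟩
end
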